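/- Let (F₀, F) be a multifunctor family from 𝒞 to 𝒟, with derived data η := F_{[],𝟙}(𝟙_{𝟙_𝒞}) and ξ_{a,b} := F_{[a,b],a⊗b}(𝟙_{a⊗b}). Define ξ̂(xs) : T(xs.map F₀) ⟶ F₀(T(xs)) by ξ̂([]) = η, ξ̂([x]) = 𝟙, and ξ̂(l ++ [x]) = (ξ̂(l) ⊗ 𝟙_{F₀(x)}) ≫ ξ_{T(l),x} for l nonempty. Then for every list xs of objects of 𝒞, F_{xs,T(xs)}(𝟙_{T(xs)}) = ξ̂(xs), and for every object y and every morphism f : T(xs) ⟶ y, F_{xs,y}(f) = ξ̂(xs) ≫ F_{[T(xs)],y}(f). In particular, a multifunctor family is uniquely determined by F₀, its arity-one components F_{[x],y}, and the elements η and ξ_{a,b}. -/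

import Mathlib

open CategoryTheory Category MonoidalCategory

universe v v' v'' u u' u''

namespace Paper

variable {C : Type u} [Category.{v} C] [MonoidalCategory C]

/-- The left-normalized tensor product of a list of objects:
`T [] = 𝟙_ C`, `T [x] = x`, and `T (l ++ [x]) = T l ⊗ x` for `l` nonempty. -/
def T : List C → C
  | [] => 𝟙_ C
  | x :: l => l.foldl (fun a b => a ⊗ b) x

@[simp] lemma T_nil : T ([] : List C) = 𝟙_ C := rfl
@[simp] lemma T_singleton (x : C) : T [x] = x := rfl

lemma T_concat (x : C) (l : List C) (y : C) :
    T (x :: l ++ [y]) = T (x :: l) ⊗ y := by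
  simp [T, List.foldl_append]

lemma T_concat' {l : List C} (h : l ≠ []) (y : C) :
    T (l ++ [y]) = T l ⊗ y := by
  cases l with
  | nil => exact absurd rfl h
  | cons x l => exact T_concat x l y

lemma T_concat2 (x : C) (l : List C) (a b : C) :
    T (x :: l ++ [a, b]) = (T (x :: l) ⊗ a) ⊗ b := by
  simp [T, List.foldl_append]

/-- Auxiliary definition for the splitting isomorphism, in the case where the
first list is nonempty:  for nonempty `xs`, `splitIso xs [y] = 𝟙` and
`splitIso xs (l ++ [y]) = (splitIso xs l ⊗ 𝟙 y) ≫ α` for `l` nonempty. -/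
def splitIsoAux (x : C) (xs' : List C) :
    (ys : List C) → (T ((x :: xs') ++ ys) ≅ T (x :: xs') ⊗ T ys) := fun ys =>
  ys.reverseRecOn
    (eqToIso (by rw [List.append_nil]) ≪≫ (ρ_ (T (x :: xs'))).symm)
    (fun l y ih =>
      match l, ih with
      | [], _ => eqToIso (T_concat x xs' y)
      | a :: l', ih =>
          eqToIso (by rw [← List.append_assoc]; exact T_concat' (by simp) y) ≪≫
            whiskerRightIso ih y ≪≫ α_ (T (x :: xs')) (T (a :: l')) y ≪≫
            whiskerLeftIso (T (x :: xs')) (eqToIso (T_concat a l' y).symm))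

/-- The splitting isomorphism `φ_{xs,ys} : T (xs ++ ys) ≅ T xs ⊗ T ys`, defined by the
clauses (in order of priority): `φ_{xs,[]} = (ρ_ (T xs)).symm`, `φ_{[],ys} = (λ_ (T ys)).symm`,
`φ_{xs,[y]} = 𝟙` for `xs` nonempty, and
`φ_{xs,l++[y]} = (φ_{xs,l} ⊗ 𝟙 y) ≫ α_ (T xs) (T l) y` for `xs`, `l` nonempty. -/
def splitIso : (xs ys : List C) → (T (xs ++ ys) ≅ T xs ⊗ T ys)
  | xs, [] => eqToIso (by rw [List.append_nil]) ≪≫ (ρ_ (T xs)).symm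
  | [], y :: ys' => (λ_ (T (y :: ys'))).symm
  | x :: xs', y :: ys' => splitIsoAux x xs' (y :: ys')

/-- The left-normalized tensor product of a componentwise family of morphisms,
encoded as a list of arrows:  `Tmor [] = 𝟙 (𝟙_ C)`, `Tmor [f] = f.hom`, and
`Tmor (l ++ [f]) = Tmor l ⊗ f.hom` for `l` nonempty. -/
def Tmor : (fs : List (Arrow C)) → (T (fs.map Comma.left) ⟶ T (fs.map Comma.right)) := fun fs =>
  fs.reverseRecOn
    (𝟙 (𝟙_ C))
    (fun l f ih =>
      match l, ih with
      | [], _ => f.hom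
      | a :: l', ih =>
          eqToHom (by erw [List.map_append]; exact T_concat' (List.cons_ne_nil _ _) _) ≫
            (ih ⊗ₘ f.hom) ≫
            eqToHom (by erw [List.map_append]; exact (T_concat' (List.cons_ne_nil _ _) _).symm))

/-- The regrouping isomorphism `Φ(xss) : T (xss.flatten) ⟶ T (xss.map T)` defined by
`Φ([]) = 𝟙` and `Φ(xss ++ [v]) = φ_{xss.flatten,v} ≫ (Φ(xss) ⊗ 𝟙) ≫ (φ_{xss.map T,[T v]})⁻¹`. -/
def Phi : (xss : List (List C)) → (T xss.flatten ⟶ T (xss.map T)) := fun xss =>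
  xss.reverseRecOn
    (𝟙 (𝟙_ C))
    (fun l v ih =>
      eqToHom (congrArg T (by simp)) ≫
        (splitIso l.flatten v).hom ≫
        (ih ⊗ₘ 𝟙 (T v)) ≫
        (splitIso (l.map T) [T v]).inv ≫
        eqToHom (congrArg T (by simp)))

/-- A multimorphism: a list of source objects together with a morphism out of their
left-normalized tensor product into a target object. -/
structure MultiMor (C : Type u) [Category.{v} C] [MonoidalCategory C] where
  src : List C
  tgt : C
  hom : T src ⟶ tgt

/-- The multicomposition `Γ(g; ⟨f_s⟩) = Φ(xss) ≫ Tmor ⟨f_s⟩ ≫ g` of the underlying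
multicategory of a monoidal category (for the left-normalized bracketing). -/
def Gamma {z : C} (fs : List (MultiMor C)) (g : T (fs.map MultiMor.tgt) ⟶ z) :
    T ((fs.map MultiMor.src).flatten) ⟶ z :=
  Phi (fs.map MultiMor.src) ≫
    eqToHom (congrArg T (by erw [List.map_map, List.map_map]; exact rfl)) ≫
    Tmor (fs.map fun m => Arrow.mk m.hom) ≫
    eqToHom (congrArg T (by erw [List.map_map]; exact rfl)) ≫ g

section LaxPart
open Functor.LaxMonoidal

variable {C : Type u} [Category.{v} C] [MonoidalCategory C]
variable {D : Type u'} [Category.{v'} D] [MonoidalCategory D]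

/-- The iterated structure map `ξ(xs) : T (xs.map F.obj) ⟶ F.obj (T xs)` of a lax
monoidal functor, defined by `ξ([]) = ε`, `ξ([x]) = 𝟙`, and
`ξ(l ++ [x]) = (ξ(l) ⊗ 𝟙) ≫ μ F (T l) x` for `l` nonempty. -/
def xi (F : C ⥤ D) [F.LaxMonoidal] :
    (xs : List C) → (T (xs.map F.obj) ⟶ F.obj (T xs)) := fun xs =>
  xs.reverseRecOn
    (ε F)
    (fun l x ih =>
      match l, ih with
      | [], _ => 𝟙 (F.obj x)
      | a :: l', ih =>
          eqToHom (by rw [List.map_append]; exact T_concat' (by simp) (F.obj x)) ≫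
            (ih ⊗ₘ 𝟙 (F.obj x)) ≫ μ F (T (a :: l')) x ≫
            eqToHom (congrArg F.obj (T_concat a l' x).symm))

end LaxPart

section BraidedPart

variable {C : Type u} [Category.{v} C] [MonoidalCategory C] [BraidedCategory C]

/-- The adjacent-swap coherence isomorphism
`Θ_{l,a,b,r} : T (l ++ [a,b] ++ r) ⟶ T (l ++ [b,a] ++ r)`, defined by
`Θ_{[],a,b,[]} = β_{a,b}`, `Θ_{l,a,b,[]} = α ≫ (𝟙 ⊗ β) ≫ α⁻¹` for `l` nonempty, and
`Θ_{l,a,b,r++[c]} = Θ_{l,a,b,r} ⊗ 𝟙 c`. -/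
def Theta (l : List C) (a b : C) :
    (r : List C) → (T (l ++ [a, b] ++ r) ⟶ T (l ++ [b, a] ++ r)) := fun r =>
  r.reverseRecOn
    (match l with
      | [] => (β_ a b).hom
      | x :: l' =>
          eqToHom (by rw [List.append_nil]; exact T_concat2 x l' a b) ≫
            (α_ (T (x :: l')) a b).hom ≫ (𝟙 (T (x :: l')) ⊗ₘ (β_ a b).hom) ≫
            (α_ (T (x :: l')) b a).inv ≫
            eqToHom (by rw [List.append_nil]; exact (T_concat2 x l' b a).symm))
    (fun r' c ih =>
      eqToHom (by rw [← List.append_assoc]; exact T_concat' (by simp) c) ≫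
        (ih ⊗ₘ 𝟙 c) ≫
        eqToHom (by rw [← List.append_assoc]; exact (T_concat' (by simp) c).symm))

end BraidedPart

section MultifunctorPart

variable (C : Type u) [Category.{v} C] [MonoidalCategory C] [SymmetricCategory C]
variable (D : Type u') [Category.{v'} D] [MonoidalCategory D] [SymmetricCategory D]

/-- A multifunctor family from `C` to `D`: an object function `obj` together with maps
`app xs y : (T xs ⟶ y) → (T (xs.map obj) ⟶ obj y)` preserving identities,
multicomposition, and the braiding action transposing the two inputs of a binary
multimorphism.  This encodes a multifunctor between the underlying multicategories. -/
structure MultifunctorFamily where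
  obj : C → D
  app : ∀ (xs : List C) (y : C), (T xs ⟶ y) → (T (xs.map obj) ⟶ obj y)
  app_id : ∀ a : C, app [a] a (𝟙 a) = 𝟙 (obj a)
  app_comp : ∀ (z : C) (fs : List (MultiMor C)) (g : T (fs.map MultiMor.tgt) ⟶ z),
    app ((fs.map MultiMor.src).flatten) z (Gamma fs g) =
      eqToHom (congrArg T
          (by rw [List.map_flatten, List.map_map, List.map_map]; exact rfl)) ≫
        Gamma (fs.map fun m => MultiMor.mk (m.src.map obj) (obj m.tgt) (app m.src m.tgt m.hom))
          (eqToHom (congrArg T (by rw [List.map_map, List.map_map]; exact rfl)) ≫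
            app (fs.map MultiMor.tgt) z g)
  app_braiding : ∀ (a b y : C) (f : T [a, b] ⟶ y),
    app [b, a] y ((β_ b a).hom ≫ f) = (β_ (obj b) (obj a)).hom ≫ app [a, b] y f

end MultifunctorPart


variable {C : Type u} [Category.{v} C] [MonoidalCategory C] [SymmetricCategory C]
variable {D : Type u'} [Category.{v'} D] [MonoidalCategory D] [SymmetricCategory D]

/-- The iterated structure map `ξ̂` derived from a multifunctor family, defined by
`ξ̂([]) = η`, `ξ̂([x]) = 𝟙`, and `ξ̂(l ++ [x]) = (ξ̂(l) ⊗ 𝟙) ≫ ξ_{T l, x}` for `l`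
nonempty, where `η = F_{[],𝟙}(𝟙)` and `ξ_{a,b} = F_{[a,b],a⊗b}(𝟙)`. -/
def xihat (P : MultifunctorFamily C D) :
    (xs : List C) → (T (xs.map P.obj) ⟶ P.obj (T xs)) := fun xs =>
  xs.reverseRecOn
    (P.app [] (𝟙_ C) (𝟙 (𝟙_ C)))
    (fun l x ih =>
      match l, ih with
      | [], _ => 𝟙 (P.obj x)
      | a :: l', ih =>
          eqToHom (by rw [List.map_append]; exact T_concat' (by simp) (P.obj x)) ≫
            (ih ⊗ₘ 𝟙 (P.obj x)) ≫
            P.app [T (a :: l'), x] (T (a :: l') ⊗ x) (𝟙 (T (a :: l') ⊗ x)) ≫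
            eqToHom (congrArg P.obj (T_concat a l' x).symm))


section Helpers

variable {E : Type u''} [Category.{v''} E] [MonoidalCategory E]

@[simp] theorem T_pair (a b : E) : T [a, b] = a ⊗ b := rfl

theorem reverseRecOn_singleton {α : Type*} {motive : List α → Sort*} (y : α)
    (nil : motive []) (step : ∀ l a, motive l → motive (l ++ [a])) :
    List.reverseRecOn [y] nil step = step [] y nil :=
  (List.reverseRecOn_concat y [] nil step).trans (by rw [List.reverseRecOn_nil])

theorem eqToHom_tensor_id {X Y Z : E} (h : X = Y) :
    (eqToHom h ⊗ₘ 𝟙 Z) = eqToHom (by rw [h]) := by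
  subst h; simp

theorem splitIso_cons_single (x : E) (xs' : List E) (y : E) :
    splitIso (x :: xs') [y] = eqToIso (T_concat x xs' y) := by
  show splitIsoAux x xs' [y] = _
  unfold splitIsoAux
  rw [reverseRecOn_singleton
    (motive := fun ys => T ((x :: xs') ++ ys) ≅ T (x :: xs') ⊗ T ys)]
  rfl

theorem Tmor_single (f : Arrow E) : Tmor [f] = f.hom := by
  unfold Tmor
  exact reverseRecOn_singleton
    (motive := fun fs => T (fs.map Comma.left) ⟶ T (fs.map Comma.right)) f _ _

theorem Tmor_concat (a : Arrow E) (l' : List (Arrow E)) (f : Arrow E) :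
    Tmor ((a :: l') ++ [f]) =
      eqToHom (by erw [List.map_append]; exact T_concat' (List.cons_ne_nil _ _) _) ≫
        (Tmor (a :: l') ⊗ₘ f.hom) ≫
        eqToHom (by erw [List.map_append]; exact (T_concat' (List.cons_ne_nil _ _) _).symm) := by
  unfold Tmor
  refine (List.reverseRecOn_concat
    (motive := fun fs => T (fs.map Comma.left) ⟶ T (fs.map Comma.right)) f (a :: l') _ _).trans ?_
  rfl

theorem Tmor_pair (f g : Arrow E) : Tmor [f, g] = (f.hom ⊗ₘ g.hom) := by
  refine (Tmor_concat f [] g).trans ?_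
  rw [Tmor_single]
  simp
  erw [eqToHom_refl, eqToHom_refl, id_comp, comp_id]
  rfl

theorem Phi_single (v : List E) :
    Phi [v] = eqToHom (by simp : T ([v].flatten) = T ([v].map T)) := by
  unfold Phi
  refine (reverseRecOn_singleton
    (motive := fun xss => T xss.flatten ⟶ T (xss.map T)) v _ _).trans ?_
  cases v with
  | nil =>
    simp [splitIso, List.map, MonoidalCategory.unitors_equal]
    exact eqToHom_trans (by simp) (by simp)
  | cons y ys => simp [splitIso, List.map]

theorem Phi_concat (xss : List (List E)) (v : List E) :
    Phi (xss ++ [v]) =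
      eqToHom (congrArg T (by simp)) ≫
        (splitIso xss.flatten v).hom ≫
        (Phi xss ⊗ₘ 𝟙 (T v)) ≫
        (splitIso (xss.map T) [T v]).inv ≫
        eqToHom (congrArg T (by simp)) := by
  unfold Phi
  refine (List.reverseRecOn_concat
    (motive := fun xss => T xss.flatten ⟶ T (xss.map T)) v xss _ _).trans ?_
  rfl

theorem Phi_pair (a : E) (u' : List E) (c : E) :
    Phi [a :: u', [c]] =
      eqToHom (by simpa using T_concat a u' c :
        T (([a :: u', [c]] : List (List E)).flatten) = T ([a :: u', [c]].map T)) := by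
  refine (Phi_concat [a :: u'] [c]).trans ?_
  rw [Phi_single]
  dsimp only [List.flatten_cons, List.flatten_nil, List.map_cons, List.map_nil,
    List.cons_append, List.nil_append]
  erw [splitIso_cons_single a (u' ++ []) c, splitIso_cons_single (T (a :: u')) [] (T [c])]
  simp [eqToHom_tensor_id]
  erw [eqToIso.inv, eqToHom_trans, eqToHom_trans]

theorem Gamma_single {u : List E} {y z : E} (p : T u ⟶ y) (g : T [y] ⟶ z) :
    Gamma [MultiMor.mk u y p] g =
      eqToHom (by simp : T (([MultiMor.mk u y p].map MultiMor.src).flatten) = T u) ≫ p ≫ g := by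
  unfold Gamma
  erw [Phi_single, Tmor_single]
  simp
  rfl

theorem Gamma_pair {a : E} {u' : List E} {b c c' z : E}
    (p : T (a :: u') ⟶ b) (q : T [c] ⟶ c')
    (g : T [b, c'] ⟶ z) :
    Gamma [MultiMor.mk (a :: u') b p, MultiMor.mk [c] c' q] g =
      eqToHom (by simpa using T_concat a u' c :
          T (([MultiMor.mk (a :: u') b p, MultiMor.mk [c] c' q].map MultiMor.src).flatten)
            = T (a :: u') ⊗ c) ≫ (p ⊗ₘ q) ≫ g := by
  unfold Gamma
  erw [Phi_pair, Tmor_pair]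
  simp
  rfl

end Helpers

section MFHelpers

variable {C : Type u} [Category.{v} C] [MonoidalCategory C] [SymmetricCategory C]
variable {D : Type u'} [Category.{v'} D] [MonoidalCategory D] [SymmetricCategory D]

theorem app_list_congr (P : MultifunctorFamily C D) {xs xs' : List C} (h : xs = xs')
    {y : C} (f : T xs ⟶ y) :
    P.app xs y f =
      eqToHom (by rw [h]) ≫ P.app xs' y (eqToHom (by rw [h]) ≫ f) := by
  subst h; simp

theorem app_eqToHom (P : MultifunctorFamily C D) (xs : List C) {y : C} (h : T xs = y) :
    P.app xs y (eqToHom h) =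
      P.app xs (T xs) (𝟙 (T xs)) ≫ eqToHom (congrArg P.obj h) := by
  subst h; simp

theorem xihat_nil (P : MultifunctorFamily C D) :
    xihat P [] = P.app [] (𝟙_ C) (𝟙 (𝟙_ C)) := by
  unfold xihat
  exact List.reverseRecOn_nil (motive := fun xs => T (xs.map P.obj) ⟶ P.obj (T xs)) _ _

theorem xihat_single (P : MultifunctorFamily C D) (x : C) :
    xihat P [x] = 𝟙 (P.obj x) := by
  unfold xihat
  exact reverseRecOn_singleton
    (motive := fun xs => T (xs.map P.obj) ⟶ P.obj (T xs)) x _ _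

theorem xihat_concat (P : MultifunctorFamily C D) (a : C) (l' : List C) (x : C) :
    xihat P ((a :: l') ++ [x]) =
      eqToHom (by rw [List.map_append]; exact T_concat' (by simp) (P.obj x)) ≫
        (xihat P (a :: l') ⊗ₘ 𝟙 (P.obj x)) ≫
        P.app [T (a :: l'), x] (T (a :: l') ⊗ x) (𝟙 (T (a :: l') ⊗ x)) ≫
        eqToHom (congrArg P.obj (T_concat a l' x).symm) := by
  unfold xihat
  refine (List.reverseRecOn_concat
    (motive := fun xs => T (xs.map P.obj) ⟶ P.obj (T xs)) x (a :: l') _ _).trans ?_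
  rfl

theorem app_id_gen (P : MultifunctorFamily C D) (xs : List C) :
    P.app xs (T xs) (𝟙 (T xs)) = xihat P xs := by
  induction xs using List.reverseRecOn with
  | nil =>
    rw [xihat_nil]
    rfl
  | append_singleton l x ih =>
    cases l with
    | nil =>
      show P.app [x] (T [x]) (𝟙 (T [x])) = xihat P [x]
      rw [xihat_single]
      exact P.app_id x
    | cons a l' =>
      have key := P.app_comp (T (a :: l') ⊗ x)
        [MultiMor.mk (a :: l') (T (a :: l')) (𝟙 (T (a :: l'))),
         MultiMor.mk [x] x (𝟙 x)] (𝟙 (T (a :: l') ⊗ x))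
      dsimp only [List.map, List.flatten_cons, List.flatten_nil,
        List.cons_append, List.nil_append] at key
      erw [Gamma_pair, Gamma_pair] at key
      simp only [id_tensorHom_id, id_comp, comp_id] at key
      rw [app_eqToHom, comp_eqToHom_iff] at key
      rw [xihat_concat]
      dsimp only [List.cons_append]
      rw [key, ih, P.app_id]
      simp [eqToHom_tensor_id]
      erw [eqToHom_refl, id_comp]

end MFHelpers


/-- A multifunctor family is determined by its object function, its arity-one
components, and the derived data `η`, `ξ`:  `F_{xs,T xs}(𝟙) = ξ̂(xs)` and
`F_{xs,y}(f) = ξ̂(xs) ≫ F_{[T xs],y}(f)`. -/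
theorem multifunctorFamily_determined (P : MultifunctorFamily C D) (xs : List C) :
    P.app xs (T xs) (𝟙 (T xs)) = xihat P xs ∧
      ∀ (y : C) (f : T xs ⟶ y), P.app xs y f = xihat P xs ≫ P.app [T xs] y f := by
  refine ⟨app_id_gen P xs, fun y f => ?_⟩
  have key := P.app_comp y [MultiMor.mk xs (T xs) (𝟙 (T xs))] f
  dsimp only [List.map, List.flatten_cons, List.flatten_nil] at key
  erw [Gamma_single, Gamma_single] at key
  simp only [id_comp, comp_id] at key
  rw [app_list_congr P (List.append_nil xs)] at key
  rw [app_id_gen] at key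
  rw [eqToHom_comp_iff] at key
  simp at key
  erw [key, eqToHom_refl, id_comp]

end Paper
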